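/- Let n ≥ 1 and let G be a subgroup of GL(n,ℝ). Suppose B₁ and B₂ are two linearly independent nondegenerate symmetric bilinear forms on ℝⁿ that are both preserved by every element of G (i.e. Bᵢ(g·v, g·w) = Bᵢ(v,w) for all g ∈ G and v,w ∈ ℝⁿ, i = 1,2), and suppose B₁ has signature (p,q) with p ≠ q. Then G acts reducibly on ℝⁿ, i.e. there exists a G-invariant linear subspace W of ℝⁿ with W ≠ 0 and W ≠ ℝⁿ. -/

import Mathlib

/-!
`T := B₁⁻¹ B₂` is `B₁`-self-adjoint and commutes with `G`, so for a monic irreducible factor `f`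
of its minimal polynomial, `ker f(T)` is a nonzero `G`-invariant subspace. If it were everything,
`f(T) = 0`. Over `ℝ`, either `f = X - a`, making `T` scalar and `B₂ = a B₁`, or
`f = (X - a)² + s` with `s > 0`; then `S := T - a` is `B₁`-self-adjoint with `S² = -s`, hence
`B₁(Sv, Sv) = -s B₁(v, v)`, and `S` carries a maximal positive definite subspace injectively onto
a negative definite one (and vice versa), forcing `p = q`.
-/

open Matrix Polynomial Module

namespace Polynomial

lemma Monic.eq_X_sub_C_or_sq_add_C_of_irreducible {f : ℝ[X]} (hm : f.Monic) (hf : Irreducible f) :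
    (∃ a, f = X - C a) ∨ ∃ a s : ℝ, 0 < s ∧ f = (X - C a) ^ 2 + C s := by
  obtain hd | hd : f.natDegree = 1 ∨ f.natDegree = 2 := by
    have := hf.natDegree_pos; have := hf.natDegree_le_two; omega
  · exact .inl ⟨-f.coeff 0, by rw [C_neg, sub_neg_eq_add]; exact hm.eq_X_add_C hd⟩
  · right
    obtain ⟨b, c, rfl⟩ := isMonicOfDegree_two_iff'.1 ⟨hd, hm⟩
    refine ⟨b / 2, c - b ^ 2 / 4, ?_, ?_⟩
    · by_contra! hs
      -- a nonpositive constant term would give the real root `b / 2 + √(b² / 4 - c)`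
      have hroot : IsRoot (X ^ 2 - C b * X + C c) (b / 2 + √(b ^ 2 / 4 - c)) := by
        have := Real.sq_sqrt (show 0 ≤ b ^ 2 / 4 - c by linarith)
        simp only [IsRoot, eval_add, eval_sub, eval_pow, eval_mul, eval_C, eval_X]
        linear_combination this
      have := degree_eq_one_of_irreducible_of_root hf hroot
      rw [degree_eq_natDegree hm.ne_zero, hd] at this
      exact absurd this (by decide)
    · have hb : C b = 2 * C (b / 2) := by rw [← C_ofNat, ← C_mul]; ring_nf
      have hc : C c = C (b / 2) ^ 2 + C (c - b ^ 2 / 4) := by rw [← C_pow, ← C_add]; ring_nf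
      rw [hb, hc]
      ring

end Polynomial

namespace Module.End

variable {K V : Type*} [Field K] [AddCommGroup V] [Module K V]

lemma exists_monic_irreducible_ker_aeval_ne_bot [FiniteDimensional K V] [Nontrivial V]
    (T : End K V) : ∃ f : K[X], f.Monic ∧ Irreducible f ∧ LinearMap.ker (aeval T f) ≠ ⊥ := by
  obtain ⟨f, hfm, hfirr, g, hg⟩ := exists_monic_irreducible_factor _ (minpoly.not_isUnit K T)
  refine ⟨f, hfm, hfirr, fun hker => ?_⟩
  have hT := Algebra.IsIntegral.isIntegral (R := K) T
  have hgm : g.Monic := hfm.of_mul_monic_left (hg ▸ minpoly.monic hT)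
  have hgT : aeval T g = 0 := by
    have hunit : IsUnit (aeval T f) := (LinearMap.isUnit_iff_ker_eq_bot _).2 hker
    rw [← hunit.mul_right_eq_zero, ← map_mul, ← hg, minpoly.aeval]
  exact minpoly.aeval_ne_zero_of_dvdNotUnit_minpoly hT hgm
    ⟨hgm.ne_zero, f, hfirr.not_isUnit, by rw [hg, mul_comm]⟩ hgT

lemma mapsTo_ker_aeval {L T : End K V} (h : Commute L T) (f : K[X]) :
    Set.MapsTo L (LinearMap.ker (aeval T f)) (LinearMap.ker (aeval T f)) := by
  intro v hv
  have hc : Commute L (aeval T f) :=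
    Algebra.commute_of_mem_adjoin_singleton_of_commute (aeval_mem_adjoin_singleton K T) h
  rw [SetLike.mem_coe, LinearMap.mem_ker] at hv ⊢
  rw [← mul_apply, ← hc.eq, mul_apply, hv, map_zero]

end Module.End

namespace LinearMap.BilinForm

section Intertwiner

variable {K V : Type*} [Field K] [AddCommGroup V] [Module K V] [FiniteDimensional K V]
  {B₁ B₂ : LinearMap.BilinForm K V}

lemma isAdjointPair_symmCompOfNondegenerate (hB₁ : B₁.Nondegenerate) (hB₁s : B₁.IsSymm)
    (hB₂s : B₂.IsSymm) :
    LinearMap.IsAdjointPair B₁ B₁ (B₂.symmCompOfNondegenerate B₁ hB₁)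
      (B₂.symmCompOfNondegenerate B₁ hB₁) :=
  fun v w => by
    rw [symmCompOfNondegenerate_left_apply, ← hB₂s.eq, ← hB₁s.eq,
      symmCompOfNondegenerate_left_apply]

lemma commute_symmCompOfNondegenerate (hB₁ : B₁.Nondegenerate) {g : End K V}
    (hg : Function.Surjective g) (h₁ : ∀ v w, B₁ (g v) (g w) = B₁ v w)
    (h₂ : ∀ v w, B₂ (g v) (g w) = B₂ v w) :
    Commute g (B₂.symmCompOfNondegenerate B₁ hB₁) := by
  refine LinearMap.ext fun v => sub_eq_zero.1 <| hB₁.1 _ fun w => ?_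
  obtain ⟨w, rfl⟩ := hg w
  rw [Module.End.mul_apply, Module.End.mul_apply, map_sub, LinearMap.sub_apply, h₁,
    symmCompOfNondegenerate_left_apply, symmCompOfNondegenerate_left_apply, h₂, sub_self]

lemma eq_smul_of_symmCompOfNondegenerate_eq_algebraMap (hB₁ : B₁.Nondegenerate) {a : K}
    (h : B₂.symmCompOfNondegenerate B₁ hB₁ = algebraMap K (End K V) a) : B₂ = a • B₁ := by
  ext v w
  rw [← symmCompOfNondegenerate_left_apply B₂ hB₁, h]
  simp

end Intertwiner

variable {V : Type*} [AddCommGroup V] [Module ℝ V]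

def PosDefOn (B : LinearMap.BilinForm ℝ V) (P : Submodule ℝ V) : Prop :=
  ∀ v ∈ P, v ≠ 0 → 0 < B v v

lemma posDefOn_span_range {B : LinearMap.BilinForm ℝ V} {ι : Type*} [Fintype ι] {u : ι → V}
    (hu : B.iIsOrtho u) (hpos : ∀ i, 0 < B (u i) (u i)) :
    B.PosDefOn (Submodule.span ℝ (Set.range u)) := by
  intro v hv hv0
  obtain ⟨c, rfl⟩ := (Submodule.mem_span_range_iff_exists_fun ℝ).1 hv
  have hdiag : B (∑ i, c i • u i) (∑ i, c i • u i) = ∑ i, c i ^ 2 * B (u i) (u i) := by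
    simp only [map_sum, map_smul, LinearMap.sum_apply, LinearMap.smul_apply, smul_eq_mul]
    refine Finset.sum_congr rfl fun i _ => ?_
    rw [Finset.sum_eq_single i (fun j _ hji => by rw [hu hji, mul_zero]) (by simp)]
    ring
  obtain ⟨i, hi⟩ : ∃ i, c i ≠ 0 := by
    by_contra! h
    exact hv0 (by simp [h])
  rw [hdiag]
  exact Finset.sum_pos' (fun j _ => by have := hpos j; positivity)
    ⟨i, Finset.mem_univ i, by have := hpos i; positivity⟩

variable [FiniteDimensional ℝ V] {B : LinearMap.BilinForm ℝ V} {P N : Submodule ℝ V}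

lemma PosDefOn.finrank_add_finrank_le (hP : B.PosDefOn P) (hN : (-B).PosDefOn N) :
    finrank ℝ P + finrank ℝ N ≤ finrank ℝ V := by
  refine Submodule.finrank_add_finrank_le_of_disjoint <|
    Submodule.disjoint_def.2 fun v hvP hvN => ?_
  by_contra hv0
  have := hN v hvN hv0
  have := hP v hvP hv0
  simp only [LinearMap.neg_apply] at *
  linarith

lemma PosDefOn.finrank_le_of_negating (hP : B.PosDefOn P) {S : End ℝ V} {k : ℝ} (hk : 0 < k)
    (hS : ∀ v, B (S v) (S v) = -k * B v v) (hPN : finrank ℝ P + finrank ℝ N = finrank ℝ V) :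
    finrank ℝ P ≤ finrank ℝ N := by
  have hneg : ∀ v ∈ P, v ≠ 0 → B (S v) (S v) < 0 := fun v hv hv0 => by
    have := hP v hv hv0
    rw [hS]; nlinarith
  have hinj : Function.Injective (S.domRestrict P) := by
    refine (injective_iff_map_eq_zero _).2 fun v hv => ?_
    by_contra hv0
    have := hneg v v.2 (by simpa using hv0)
    simp_all [LinearMap.domRestrict_apply]
  have hSP : (-B).PosDefOn (LinearMap.range (S.domRestrict P)) := by
    rintro _ ⟨v, rfl⟩ hv0
    have := hneg v v.2 (fun h => hv0 (by simp [h]))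
    simpa using this
  have := hP.finrank_add_finrank_le hSP
  rw [LinearMap.finrank_range_of_inj hinj] at this
  omega

lemma card_eq_card_of_isAdjointPair_sq_eq_neg {ι κ : Type*} [Fintype ι] [Fintype κ]
    (e : Basis (ι ⊕ κ) ℝ V) (he : B.iIsOrtho e) (hpos : ∀ i, 0 < B (e (.inl i)) (e (.inl i)))
    (hneg : ∀ j, B (e (.inr j)) (e (.inr j)) < 0) {S : End ℝ V}
    (hS : LinearMap.IsAdjointPair B B S S) {s : ℝ} (hs : 0 < s)
    (hSS : S ^ 2 = -algebraMap ℝ (End ℝ V) s) :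
    Fintype.card ι = Fintype.card κ := by
  set P := Submodule.span ℝ (Set.range (e ∘ .inl))
  set N := Submodule.span ℝ (Set.range (e ∘ .inr))
  have hPrank : finrank ℝ P = Fintype.card ι :=
    finrank_span_eq_card (e.linearIndependent.comp _ Sum.inl_injective)
  have hNrank : finrank ℝ N = Fintype.card κ :=
    finrank_span_eq_card (e.linearIndependent.comp _ Sum.inr_injective)
  have hV : finrank ℝ V = Fintype.card ι + Fintype.card κ := by
    rw [finrank_eq_card_basis e, Fintype.card_sum]
  have hP : B.PosDefOn P := posDefOn_span_range (he.comp_of_injective Sum.inl_injective) hpos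
  have hN : (-B).PosDefOn N := posDefOn_span_range
    (fun i j hij => neg_eq_zero.2 (he (Sum.inr_injective.ne hij))) (fun j => by simpa using hneg j)
  have hSB : ∀ v, B (S v) (S v) = -s * B v v := fun v => by
    rw [hS, ← Module.End.mul_apply, ← pow_two, hSS]
    simp
  have hSB' : ∀ v, (-B) (S v) (S v) = -s * (-B) v v := fun v => by simp [hSB]
  have h₁ := hP.finrank_le_of_negating hs hSB (N := N) (by omega)
  have h₂ := hN.finrank_le_of_negating hs hSB' (N := P) (by omega)
  omega

end LinearMap.BilinForm

open LinearMap.BilinForm in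
theorem reducible_of_two_forms_signature_ne
    (n : ℕ) (hn : 1 ≤ n) (G : Subgroup (GL (Fin n) ℝ))
    (B₁ B₂ : LinearMap.BilinForm ℝ (Fin n → ℝ))
    (hsymm₁ : ∀ v w, B₁ v w = B₁ w v)
    (hsymm₂ : ∀ v w, B₂ v w = B₂ w v)
    (hnd₁ : ∀ v, (∀ w, B₁ v w = 0) → v = 0)
    (hind : LinearIndependent ℝ ![B₁, B₂])
    (hinv₁ : ∀ g ∈ G, ∀ v w : Fin n → ℝ,
      B₁ ((g : Matrix (Fin n) (Fin n) ℝ).mulVec v)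
         ((g : Matrix (Fin n) (Fin n) ℝ).mulVec w) = B₁ v w)
    (hinv₂ : ∀ g ∈ G, ∀ v w : Fin n → ℝ,
      B₂ ((g : Matrix (Fin n) (Fin n) ℝ).mulVec v)
         ((g : Matrix (Fin n) (Fin n) ℝ).mulVec w) = B₂ v w)
    (p q : ℕ) (hpq : p + q = n) (hne : p ≠ q)
    (hsig : ∃ e : Module.Basis (Fin n) ℝ (Fin n → ℝ), ∀ i j,
      B₁ (e i) (e j) = if i = j then (if (i : ℕ) < p then 1 else -1) else 0) :
    ∃ W : Submodule ℝ (Fin n → ℝ), W ≠ ⊥ ∧ W ≠ ⊤ ∧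
      ∀ g ∈ G, ∀ v ∈ W, (g : Matrix (Fin n) (Fin n) ℝ).mulVec v ∈ W := by
  have : Nonempty (Fin n) := ⟨⟨0, hn⟩⟩
  have hB₁ : B₁.Nondegenerate := ⟨hnd₁, fun v h => hnd₁ v fun w => (hsymm₁ v w).trans (h w)⟩
  set T := B₂.symmCompOfNondegenerate B₁ hB₁
  have hT : LinearMap.IsAdjointPair B₁ B₁ T T :=
    isAdjointPair_symmCompOfNondegenerate hB₁ ⟨hsymm₁⟩ ⟨hsymm₂⟩
  obtain ⟨f, hfm, hfirr, hW⟩ := Module.End.exists_monic_irreducible_ker_aeval_ne_bot T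
  refine ⟨LinearMap.ker (aeval T f), hW, fun htop => ?_, fun g hg v hv => ?_⟩
  · have hf0 : aeval T f = 0 := LinearMap.ker_eq_top.1 htop
    rcases hfm.eq_X_sub_C_or_sq_add_C_of_irreducible hfirr with ⟨a, rfl⟩ | ⟨a, s, hs, rfl⟩
    · have hB₂ := eq_smul_of_symmCompOfNondegenerate_eq_algebraMap hB₁
        (by simpa [sub_eq_zero] using hf0)
      have := ((LinearIndependent.pair_iff (R := ℝ) (x := B₁) (y := B₂)).1 hind a (-1)
        (by simp [hB₂])).2
      norm_num at this
    · obtain ⟨e, he⟩ := hsig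
      subst hpq
      have hSS : (T - a • 1) ^ 2 = -algebraMap ℝ _ s := by
        simpa [Algebra.algebraMap_eq_smul_one, eq_neg_iff_add_eq_zero] using hf0
      have := card_eq_card_of_isAdjointPair_sq_eq_neg (e.reindex finSumFinEquiv.symm)
        (fun x y hxy => by simp [Function.onFun, he, finSumFinEquiv.injective.ne hxy])
        (fun i => by simp [he]) (fun j => by simp [he])
        (hT.sub (LinearMap.isAdjointPair_one.smul a)) hs hSS
      exact hne (by simpa using this)
  · exact Module.End.mapsTo_ker_aeval (commute_symmCompOfNondegenerate hB₁
      (g := mulVecLin (g : Matrix (Fin n) (Fin n) ℝ)) (mulVec_surjective_iff_isUnit.2 g.isUnit)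
      (hinv₁ g hg) (hinv₂ g hg)) f hv
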